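/- Let k ≥ 5 be an integer and let ℓ be a real number with u_1(k) < ℓ < u_2(k). Then h(k,ℓ) ≤ 2/(k−2). -/
import Mathlib


noncomputable section

def u1 (k : ℕ) : ℝ := -(2 * ((k : ℝ) - 1)) / ((k : ℝ) - 2)

def u2 (k : ℕ) : ℝ :=
  ((k : ℝ) - 4 - Real.sqrt (17 * (k : ℝ) ^ 2 - 48 * (k : ℝ) + 32)) / (2 * ((k : ℝ) - 2))

def u3 (k : ℕ) : ℝ :=
  4 * ((k : ℝ) - 1) * (-3 * (k : ℝ) + 4 - 2 * Real.sqrt ((k : ℝ) - 1)) /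
    (((k : ℝ) - 2) * (9 * (k : ℝ) - 10))

def u4 (k : ℕ) : ℝ :=
  -1 - (k : ℝ) /
    (3 * (k : ℝ) ^ 2 - 2 * ((k : ℝ) - 1) ^ 2 * Real.sqrt (2 * (k : ℝ) / ((k : ℝ) - 1)) -
      4 * (k : ℝ))

def gammaVal (k : ℕ) (l : ℝ) : ℝ :=
  ((k : ℝ) - 2) * (9 * (k : ℝ) - 10) * l ^ 2 + 8 * ((k : ℝ) - 1) * (3 * (k : ℝ) - 4) * l +
    16 * ((k : ℝ) - 1) ^ 2

def hVal (k : ℕ) (l : ℝ) : ℝ :=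
  (4 * ((k : ℝ) - 2) * l + 8 * ((k : ℝ) - 1)) /
      (Real.sqrt (gammaVal k l) + 3 * ((k : ℝ) - 2) * l + 8 * ((k : ℝ) - 1)) - 2 - l

theorem hVal_le (k : ℕ) (hk : 5 ≤ k) (l : ℝ) (h1 : u1 k < l) (h2 : l < u2 k) :
    hVal k l ≤ 2 / ((k : ℝ) - 2) := by
  have hx : (5 : ℝ) ≤ (k : ℝ) := by exact_mod_cast hk
  set x : ℝ := (k : ℝ) with hxdef
  have hk2 : 0 < x - 2 := by linarith
  -- C > 0 from h1
  have hC : 0 < (x - 2) * l + 2 * (x - 1) := by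
    rw [u1, div_lt_iff₀ hk2] at h1
    nlinarith
  -- s ≥ 0
  have hs : (0 : ℝ) ≤ 17 * x ^ 2 - 48 * x + 32 := by nlinarith
  -- from h2 : sqrt s < t
  have ht : Real.sqrt (17 * x ^ 2 - 48 * x + 32) < x - 4 - 2 * (x - 2) * l := by
    rw [u2, lt_div_iff₀ (by linarith : (0:ℝ) < 2 * (x - 2))] at h2
    nlinarith
  have hst : 17 * x ^ 2 - 48 * x + 32 < (x - 4 - 2 * (x - 2) * l) ^ 2 := by
    have h0 := Real.sqrt_nonneg (17 * x ^ 2 - 48 * x + 32)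
    have h1' := Real.sq_sqrt hs
    nlinarith
  -- gamma ≥ B'^2
  have hgB : (3 * (x - 2) * l + 4 * x) ^ 2 ≤ gammaVal k l := by
    rw [gammaVal, ← hxdef]
    nlinarith [mul_pos hk2 (sub_pos.mpr hst)]
  have hsq : -(3 * (x - 2) * l + 4 * x) ≤ Real.sqrt (gammaVal k l) := by
    have habs : |3 * (x - 2) * l + 4 * x| ≤ Real.sqrt (gammaVal k l) := by
      rw [← Real.sqrt_sq_eq_abs]
      exact Real.sqrt_le_sqrt hgB
    calc -(3 * (x - 2) * l + 4 * x) ≤ |3 * (x - 2) * l + 4 * x| := neg_le_abs _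
      _ ≤ _ := habs
  have hsqnn := Real.sqrt_nonneg (gammaVal k l)
  have hD : 0 < Real.sqrt (gammaVal k l) + 3 * (x - 2) * l + 8 * (x - 1) := by
    nlinarith
  rw [hVal, ← hxdef]
  have key : (x - 2) * (4 * (x - 2) * l + 8 * (x - 1)) ≤
      ((x - 2) * l + 2 * (x - 1)) *
        (Real.sqrt (gammaVal k l) + 3 * (x - 2) * l + 8 * (x - 1)) := by
    nlinarith [mul_le_mul_of_nonneg_left hsq (le_of_lt hC)]
  have hdiv : (4 * (x - 2) * l + 8 * (x - 1)) /
      (Real.sqrt (gammaVal k l) + 3 * (x - 2) * l + 8 * (x - 1)) ≤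
      ((x - 2) * l + 2 * (x - 1)) / (x - 2) := by
    rw [div_le_div_iff₀ hD hk2]
    nlinarith
  have heq : ((x - 2) * l + 2 * (x - 1)) / (x - 2) - 2 - l = 2 / (x - 2) := by
    field_simp
    ring
  linarith
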